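/- Bypass theorem: if G''^{g''} ∈ G'^{g'} ∈ G^g and G''^{g''} = G^g (equivalent), then G^g is equivalent to the game ((G \ {G'^{g'}}) ∪ G'')^g obtained by removing the reversible option G'^{g'} and adding all options of G'^{g'}'s option G''^{g''}. -/

import Mathlib

inductive AGame : Type where
  | mk : List AGame → Bool → AGame

namespace AGame

noncomputable instance : DecidableEq AGame := Classical.decEq _

def opts : AGame → List AGame | mk gs _ => gs
def act : AGame → Bool | mk _ g => g

theorem sizeOf_lt_of_mem {G G' : AGame} (h : G' ∈ G.opts) : sizeOf G' < sizeOf G := by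
  cases G with
  | mk gs g =>
    simp only [opts] at h
    have := List.sizeOf_lt_of_mem h
    simp [AGame.mk.sizeOf_spec]
    omega

/-- Disjunctive sum of games with activeness. -/
def add (G H : AGame) : AGame :=
  mk (G.opts.attach.map (fun x => add x.1 H) ++
      H.opts.attach.map (fun y => add G y.1)) (G.act || H.act)
termination_by sizeOf G + sizeOf H
decreasing_by
  · have := sizeOf_lt_of_mem x.2; omega
  · have := sizeOf_lt_of_mem y.2; omega

/-- `PPos G` means the outcome of `G` is 𝒫 (second player wins). -/
def PPos (G : AGame) : Prop :=
  G.act = false ∨ ∀ G' ∈ G.opts.attach, ¬ PPos G'.1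
termination_by sizeOf G
decreasing_by
  have := sizeOf_lt_of_mem G'.2; omega

/-- Hereditary set-equality (the paper's ≅). -/
def Identical (G H : AGame) : Prop :=
  G.act = H.act ∧ (∀ G' ∈ G.opts.attach, ∃ H' ∈ H.opts.attach, Identical G'.1 H'.1)
              ∧ (∀ H' ∈ H.opts.attach, ∃ G' ∈ G.opts.attach, Identical G'.1 H'.1)
termination_by sizeOf G + sizeOf H
decreasing_by
  · have := sizeOf_lt_of_mem G'.2; have := sizeOf_lt_of_mem H'.2; omega
  · have := sizeOf_lt_of_mem G'.2; have := sizeOf_lt_of_mem H'.2; omega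

/-- Equivalence of games with activeness: same outcome in every sum. -/
def Equiv (G H : AGame) : Prop := ∀ X : AGame, (PPos (add G X) ↔ PPos (add H X))

end AGame

namespace AGame

/-- Nimbers with activeness: `star γ n ≅ {star γ j : j < n}^{γ n}`. -/
def star (γ : ℕ → Bool) : ℕ → AGame
  | n => mk ((List.range n).attach.map (fun j => star γ j.1)) (γ n)
termination_by n => n
decreasing_by
  have := j.2; simp [List.mem_range] at this; omega

/-- The generalized Grundy set `𝒢^γ(G)`. -/
def GSet (γ : ℕ → Bool) (G : AGame) : Set ℕ := {n | PPos (add G (star γ n))}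

/-- Minimum excludant of a set of naturals. -/
noncomputable def mex (S : Set ℕ) : ℕ := sInf {n | n ∉ S}

/-- Ordinary Grundy value, computed ignoring activeness. -/
noncomputable def grundy (G : AGame) : ℕ :=
  mex {m | ∃ G' ∈ G.opts.attach, grundy G'.1 = m}
termination_by sizeOf G
decreasing_by
  have := sizeOf_lt_of_mem G'.2; omega

/-- The three types of games with activeness. -/
inductive AType : Type where
  | inactive : AType            -- type 0
  | activeSomeInactive : AType  -- type 1_{∃0}
  | activeAllActive : AType     -- type 1_{∀1}

open Classical in
/-- `type(G^g)`. -/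
noncomputable def typ (G : AGame) : AType :=
  if G.act = false then .inactive
  else if ∃ G' ∈ G.opts, G'.act = false then .activeSomeInactive
  else .activeAllActive

/-- Formal birthday `b(G)`. -/
def bday (G : AGame) : ℕ :=
  (G.opts.attach.map (fun G' => bday G'.1 + 1)).foldr max 0
termination_by sizeOf G
decreasing_by
  have := sizeOf_lt_of_mem G'.2; omega

/-- An option `G'` of `G` is reversible if it has an option equivalent to `G`. -/
def Reversible (G G' : AGame) : Prop := ∃ G'' ∈ G'.opts, Equiv G'' G

/-- A canonical game: all options canonical and no option reversible. -/
def Canonical (G : AGame) : Prop :=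
  (∀ G' ∈ G.opts.attach, Canonical G'.1) ∧ (∀ G' ∈ G.opts, ¬ Reversible G G')
termination_by sizeOf G
decreasing_by
  have := sizeOf_lt_of_mem G'.2; omega

/-- A transitive game: all options transitive and options of options are options. -/
def TransGame (G : AGame) : Prop :=
  (∀ G' ∈ G.opts.attach, TransGame G'.1) ∧ (∀ G' ∈ G.opts, ∀ G'' ∈ G'.opts, G'' ∈ G.opts)
termination_by sizeOf G
decreasing_by
  have := sizeOf_lt_of_mem G'.2; omega

/-- `G` is covered by `H` if every option of `G` is equivalent to some option of `H`. -/
def Covered (G H : AGame) : Prop := ∀ G' ∈ G.opts, ∃ H' ∈ H.opts, Equiv G' H'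

/-- The relation `G ⋈ H`. -/
def Bowtie (G H : AGame) : Prop :=
  (∀ G' ∈ G.opts, ¬ Equiv G' H) ∧ (∀ H' ∈ H.opts, ¬ Equiv G H')

/-- The linear chain `∅^{g₀ g₁ … gₙ}`. -/
def chain (g : ℕ → Bool) : ℕ → AGame
  | 0 => mk [] (g 0)
  | n + 1 => mk [chain g n] (g (n + 1))

end AGame

/-!
Write `A = G^g` and `B = ((G \ {G'}) ∪ G'')^g` and show `A + X ∈ 𝒫 ↔ B + X ∈ 𝒫` by induction on
`X`, moves in `X` being matched by induction. If `A + X ∈ 𝒫` then `G'' + X ∈ 𝒫`, so a move from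
`B + X` to a new option `G''_j + X` loses. Conversely, if `B + X ∈ 𝒫`, every option of `G'' + X`
is, up to equivalence, an option of `B + X`, so `G'' + X ∈ 𝒫` and hence `A + X ∈ 𝒫`. An inactive
`G'' ≡ A` forces `A` to be inactive, which handles the positions where `G'' + X` is inactive.
-/

namespace AGame

theorem act_add (G H : AGame) : (add G H).act = (G.act || H.act) := by
  rw [add]; rfl

theorem mem_opts_add {G H Y : AGame} : Y ∈ (add G H).opts ↔
    (∃ G' ∈ G.opts, Y = add G' H) ∨ ∃ H' ∈ H.opts, Y = add G H' := by
  rw [add]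
  simp only [opts, List.mem_append, List.mem_map, List.mem_attach, true_and,
    Subtype.exists, eq_comm, exists_prop]

theorem add_mem_opts_add_left {G G' : AGame} (H : AGame) (h : G' ∈ G.opts) :
    add G' H ∈ (add G H).opts :=
  mem_opts_add.mpr (Or.inl ⟨G', h, rfl⟩)

theorem add_mem_opts_add_right (G : AGame) {H H' : AGame} (h : H' ∈ H.opts) :
    add G H' ∈ (add G H).opts :=
  mem_opts_add.mpr (Or.inr ⟨H', h, rfl⟩)

theorem pPos_iff (G : AGame) : PPos G ↔ G.act = false ∨ ∀ G' ∈ G.opts, ¬ PPos G' := by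
  rw [PPos]
  simp only [List.mem_attach, true_implies, Subtype.forall]

theorem pPos_of_act_eq_false {G : AGame} (h : G.act = false) : PPos G :=
  (pPos_iff G).mpr (Or.inl h)

theorem pPos_of_forall_not_pPos {G : AGame} (h : ∀ G' ∈ G.opts, ¬ PPos G') : PPos G :=
  (pPos_iff G).mpr (Or.inr h)

theorem PPos.not_pPos_of_mem_opts {G G' : AGame} (hG : PPos G) (hact : G.act = true)
    (h : G' ∈ G.opts) : ¬ PPos G' := by
  rcases (pPos_iff G).mp hG with hinact | hall
  · simp [hact] at hinact
  · exact hall G' h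

/-- Witness `X = {∅^0}^0`: `G + X` is inactive, hence in `𝒫`, while for an active `H` the sum
`H + X` has the option `H + ∅^0`, which is in `𝒫` because `G + ∅^0` is. -/
theorem Equiv.act_eq_false {G H : AGame} (hGH : Equiv G H) (hG : G.act = false) :
    H.act = false := by
  by_contra hH
  rw [Bool.not_eq_false] at hH
  have hempty : PPos (add H (mk [] false)) :=
    (hGH _).mp (pPos_of_act_eq_false (by rw [act_add, hG]; rfl))
  have hsingleton : PPos (add H (mk [mk [] false] false)) :=
    (hGH _).mp (pPos_of_act_eq_false (by rw [act_add, hG]; rfl))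
  exact hsingleton.not_pPos_of_mem_opts (by rw [act_add, hH]; rfl)
    (add_mem_opts_add_right H (List.mem_singleton_self _)) hempty

section Replace

variable {gs S : List AGame} {g : Bool} {H : AGame}

theorem pPos_add_mk_iff_pPos_add_mk_append (hS : S ⊆ gs) (hH : Equiv H (mk gs g)) (X : AGame) :
    PPos (add (mk gs g) X) ↔ PPos (add (mk (S ++ H.opts) g) X) := by
  set A := mk gs g
  set B := mk (S ++ H.opts) g
  have ih : ∀ X' ∈ X.opts, (PPos (add A X') ↔ PPos (add B X')) := fun X' hX' =>
    pPos_add_mk_iff_pPos_add_mk_append hS hH X'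
  have hact : (add B X).act = (add A X).act := by rw [act_add, act_add]; rfl
  by_cases hinact : (add A X).act = false
  · exact iff_of_true (pPos_of_act_eq_false hinact) (pPos_of_act_eq_false (hact ▸ hinact))
  rw [Bool.not_eq_false] at hinact
  constructor
  · intro hA
    refine pPos_of_forall_not_pPos fun Y hY => ?_
    rcases mem_opts_add.mp hY with ⟨B', hB', rfl⟩ | ⟨X', hX', rfl⟩
    · rcases List.mem_append.mp hB' with hB' | hB'
      · exact hA.not_pPos_of_mem_opts hinact (add_mem_opts_add_left X (hS hB'))
      · have hHX : (add H X).act = true := by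
          by_contra hHX
          simp only [act_add, Bool.not_eq_true, Bool.or_eq_false_iff] at hHX hinact
          simp [hH.act_eq_false hHX.1, hHX.2, A] at hinact
        exact ((hH X).mpr hA).not_pPos_of_mem_opts hHX (add_mem_opts_add_left X hB')
    · exact fun hBX' => hA.not_pPos_of_mem_opts hinact (add_mem_opts_add_right A hX')
        ((ih X' hX').mpr hBX')
  · intro hB
    refine (hH X).mp (pPos_of_forall_not_pPos fun Y hY => ?_)
    rcases mem_opts_add.mp hY with ⟨H', hH', rfl⟩ | ⟨X', hX', rfl⟩
    · exact hB.not_pPos_of_mem_opts (hact ▸ hinact)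
        (add_mem_opts_add_left X (List.mem_append_right S hH'))
    · exact fun hHX' => hB.not_pPos_of_mem_opts (hact ▸ hinact) (add_mem_opts_add_right B hX')
        ((ih X' hX').mp ((hH X').mp hHX'))
termination_by X
decreasing_by exact sizeOf_lt_of_mem hX'

theorem equiv_mk_append_opts (hS : S ⊆ gs) (hH : Equiv H (mk gs g)) :
    Equiv (mk gs g) (mk (S ++ H.opts) g) :=
  pPos_add_mk_iff_pPos_add_mk_append hS hH

end Replace

end AGame

theorem AGame.bypass_general (gs : List AGame) (g : Bool) (G' G'' : AGame)
    (h3 : AGame.Equiv G'' (AGame.mk gs g)) :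
    AGame.Equiv (AGame.mk gs g)
      (AGame.mk ((gs.filter (fun x => x ≠ G')) ++ G''.opts) g) :=
  AGame.equiv_mk_append_opts (List.filter_subset_self _) h3

/-- Bypass theorem: bypassing a reversible option yields an equivalent game. -/
theorem AGame.bypass (gs : List AGame) (g : Bool) (G' G'' : AGame)
    (h1 : G' ∈ gs) (h2 : G'' ∈ G'.opts) (h3 : AGame.Equiv G'' (AGame.mk gs g)) :
    AGame.Equiv (AGame.mk gs g)
      (AGame.mk ((gs.filter (fun x => x ≠ G')) ++ G''.opts) g) :=
  AGame.bypass_general gs g G' G'' h3
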